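/- Define polynomials 𝕋_m(x) with coefficients in ℚ(q) by 𝕋_m(x) := 0 for integers m ≤ 0 and 𝕋_{n+1}(x) := ∑_{k ≥ 0} QB_s(n-k, k) x^{k} for n ≥ 0. Then for every n ≥ 1 the recurrence 𝕋_{n+1}(x) = 𝕋_n(x) + x · ∑_{j=1}^{s} q^{n-j-1} · 𝕋_{n-j}(x/q) holds as an identity of polynomials in x over ℚ(q), where q^{n-j-1} is an integer (possibly negative) power of q in ℚ(q) and 𝕋_m(x/q) denotes the polynomial 𝕋_m with x replaced by q^{-1}x. -/
import Mathlib


/-- The q-quasi-bi^s-nomial coefficients `QB_s(n,k) ∈ ℚ(q)` (here `q = RatFunc.X`). -/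
noncomputable def QB (s : ℕ) : ℕ → ℤ → RatFunc ℚ
  | 0, k => if k = 0 then 1 else 0
  | n+1, k =>
    if k < 0 ∨ (n+1 : ℤ) < k then 0
    else QB s n k +
      ∑ j ∈ Finset.range s, if j ≤ n then RatFunc.X ^ (n - j) * QB s (n - j) (k - 1) else 0
  termination_by n _ => n
  decreasing_by all_goals omega

/-- `QB_s(n,k)` extended by zero to negative `n`. -/
noncomputable def QBZ (s : ℕ) (n k : ℤ) : RatFunc ℚ :=
  if n < 0 then 0 else QB s n.toNat k

/-- The polynomials `𝕋_m(x)` over `ℚ(q)`: `𝕋_m = 0` for `m ≤ 0` and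
`𝕋_{n+1}(x) = ∑_{k ≥ 0} QB_s(n-k,k) x^k` for `n ≥ 0` (a finite sum). -/
noncomputable def TT (s : ℕ) (m : ℤ) : Polynomial (RatFunc ℚ) :=
  if m ≤ 0 then 0
  else ∑ᶠ k : ℕ, Polynomial.C (QBZ s (m - 1 - k) (k : ℤ)) * Polynomial.X ^ k

lemma QB_eq_zero (s : ℕ) (n : ℕ) (k : ℤ) (h : k < 0 ∨ (n : ℤ) < k) : QB s n k = 0 := by
  cases n with
  | zero =>
    rw [QB]
    simp only [Nat.cast_zero] at h
    have : k ≠ 0 := by omega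
    simp [this]
  | succ m => rw [QB, if_pos (by push_cast at h ⊢; omega)]

lemma QBZ_eq_zero (s : ℕ) (n k : ℤ) (h : k < 0 ∨ n < k) : QBZ s n k = 0 := by
  unfold QBZ
  split
  · rfl
  · exact QB_eq_zero s n.toNat k (by omega)

lemma QBZ_neg (s : ℕ) (n k : ℤ) (h : n < 0) : QBZ s n k = 0 := by
  unfold QBZ; rw [if_pos h]

lemma key (s : ℕ) (m c : ℤ) (hc : 0 ≤ c) (h : 0 < m ∨ 0 < c) :
    QBZ s m c = QBZ s (m - 1) c +
      ∑ j ∈ Finset.Icc 1 s, (RatFunc.X : RatFunc ℚ) ^ (m - (j : ℤ)) * QBZ s (m - (j : ℤ)) (c - 1) := by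
  rcases le_or_gt m 0 with hm | hm
  · have h1 : QBZ s m c = 0 := by
      rcases lt_or_eq_of_le hm with h' | h'
      · exact QBZ_neg s m c h'
      · subst h'
        unfold QBZ
        rw [if_neg (by omega)]
        exact QB_eq_zero s _ c (by simp; omega)
    have hz : ∀ j ∈ Finset.Icc 1 s,
        (RatFunc.X : RatFunc ℚ) ^ (m - (j : ℤ)) * QBZ s (m - (j : ℤ)) (c - 1) = 0 := by
      intro j hj
      simp only [Finset.mem_Icc] at hj
      rw [QBZ_neg s _ _ (by omega), mul_zero]
    rw [h1, QBZ_neg s (m - 1) c (by omega), Finset.sum_congr rfl hz]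
    simp
  · obtain ⟨N, rfl⟩ : ∃ N : ℕ, m = (N : ℤ) + 1 := ⟨(m - 1).toNat, by omega⟩
    have hQBZ : QBZ s ((N : ℤ) + 1) c = QB s (N + 1) c := by
      unfold QBZ; rw [if_neg (by omega)]; congr 1 <;> omega
    have hQBZ' : QBZ s ((N : ℤ) + 1 - 1) c = QB s N c := by
      unfold QBZ; rw [if_neg (by omega)]; congr 1 <;> omega
    rw [hQBZ, hQBZ', QB]
    by_cases hbig : c < 0 ∨ ((N : ℤ) + 1) < c
    · rw [if_pos (by push_cast; omega)]
      have hz : ∀ j ∈ Finset.Icc 1 s,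
          (RatFunc.X : RatFunc ℚ) ^ ((N : ℤ) + 1 - (j : ℤ)) *
            QBZ s ((N : ℤ) + 1 - (j : ℤ)) (c - 1) = 0 := by
        intro j hj
        simp only [Finset.mem_Icc] at hj
        rw [QBZ_eq_zero s _ _ (Or.inr (by omega)), mul_zero]
      rw [QB_eq_zero s N c (Or.inr (by omega)), Finset.sum_congr rfl hz]
      simp
    · rw [if_neg (by push_cast at hbig ⊢; omega)]
      congr 1
      refine Finset.sum_bij' (fun (i : ℕ) (_ : i ∈ Finset.range s) => i + 1)
        (fun (j : ℕ) (_ : j ∈ Finset.Icc 1 s) => j - 1) ?_ ?_ ?_ ?_ ?_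
      · intro i hi; simp only [Finset.mem_range] at hi; simp only [Finset.mem_Icc]; omega
      · intro j hj; simp only [Finset.mem_Icc] at hj; simp only [Finset.mem_range]; omega
      · intro i _; omega
      · intro j hj; simp only [Finset.mem_Icc] at hj; omega
      · intro i hi
        simp only [Finset.mem_range] at hi
        by_cases hiN : i ≤ N
        · rw [if_pos hiN]
          have h1 : ((N : ℤ) + 1 - ((i + 1 : ℕ) : ℤ)) = ((N - i : ℕ) : ℤ) := by omega
          have h2 : QBZ s ((N - i : ℕ) : ℤ) (c - 1) = QB s (N - i) (c - 1) := by
            unfold QBZ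
            rw [if_neg (by omega)]
            congr 1 <;> omega
          rw [h1, zpow_natCast, h2]
        · rw [if_neg hiN]
          have : QBZ s ((N:ℤ) + 1 - ((i + 1 : ℕ) : ℤ)) (c - 1) = 0 := by
            apply QBZ_neg; push_cast; omega
          rw [this, mul_zero]

lemma TT_coeff (s : ℕ) (m : ℤ) (k : ℕ) :
    (TT s m).coeff k = QBZ s (m - 1 - k) k := by
  unfold TT
  rcases le_or_gt m 0 with hm | hm
  · rw [if_pos hm, QBZ_neg s _ _ (by omega), Polynomial.coeff_zero]
  · rw [if_neg (by omega)]
    have hsupp : (Function.support fun j : ℕ =>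
        Polynomial.C (QBZ s (m - 1 - j) (j : ℤ)) * Polynomial.X ^ j) ⊆
        ↑(Finset.range m.toNat) := by
      intro j hj
      simp only [Finset.coe_range, Set.mem_Iio]
      by_contra hjm
      apply hj
      have : QBZ s (m - 1 - j) (j : ℤ) = 0 := QBZ_neg s _ _ (by omega)
      simp [this]
    rw [finsum_eq_sum_of_support_subset _ hsupp, Polynomial.finset_sum_coeff]
    simp only [Polynomial.coeff_C_mul, Polynomial.coeff_X_pow, mul_ite, mul_one, mul_zero]
    rw [Finset.sum_ite_eq (Finset.range m.toNat) k (fun j => QBZ s (m - 1 - j) (j : ℤ))]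
    split
    · rfl
    · rename_i hk
      rw [QBZ_neg s _ _ (by simp only [Finset.mem_range] at hk; omega)]

lemma coeff_comp_C_mul_X {R : Type*} [CommRing R] (p : Polynomial R) (c : R) (k : ℕ) :
    (p.comp (Polynomial.C c * Polynomial.X)).coeff k = c ^ k * p.coeff k := by
  induction p using Polynomial.induction_on' with
  | add p q hp hq => simp [Polynomial.add_comp, hp, hq, mul_add]
  | monomial n a =>
    rw [← Polynomial.C_mul_X_pow_eq_monomial, Polynomial.mul_comp, Polynomial.C_comp,
      Polynomial.pow_comp, Polynomial.X_comp, mul_pow, ← Polynomial.C_pow, ← mul_assoc,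
      ← Polynomial.C_mul]
    simp only [Polynomial.coeff_C_mul, Polynomial.coeff_X_pow, mul_ite, mul_one, mul_zero]
    split <;> rename_i h
    · subst h; ring
    · rfl

/-- For every `n ≥ 1`,
`𝕋_{n+1}(x) = 𝕋_n(x) + x ∑_{j=1}^{s} q^{n-j-1} 𝕋_{n-j}(x/q)` as polynomials over
`ℚ(q)`, where `q^{n-j-1}` is an integer (possibly negative) power of `q`. -/
theorem qsbonacci_recurrence' (s : ℕ) (hs : 1 ≤ s) (n : ℕ) (hn : 1 ≤ n) :
    TT s ((n : ℤ) + 1) =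
      TT s (n : ℤ) +
        Polynomial.X *
          ∑ j ∈ Finset.Icc 1 s,
            Polynomial.C ((RatFunc.X : RatFunc ℚ) ^ ((n : ℤ) - j - 1)) *
              (TT s ((n : ℤ) - j)).comp
                (Polynomial.C ((RatFunc.X : RatFunc ℚ)⁻¹) * Polynomial.X) := by
  ext k
  rw [Polynomial.coeff_add, TT_coeff, TT_coeff]
  cases k with
  | zero =>
    have hmul : (Polynomial.X * ∑ j ∈ Finset.Icc 1 s,
        Polynomial.C ((RatFunc.X : RatFunc ℚ) ^ ((n : ℤ) - j - 1)) *
          (TT s ((n : ℤ) - j)).comp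
            (Polynomial.C ((RatFunc.X : RatFunc ℚ)⁻¹) * Polynomial.X)).coeff 0 = 0 := by
      rw [Polynomial.mul_coeff_zero, Polynomial.coeff_X_zero, zero_mul]
    rw [hmul, add_zero]
    have hkey := key s (n : ℤ) 0 le_rfl (Or.inl (by exact_mod_cast hn))
    rw [Finset.sum_congr rfl (fun j _ => ?_), Finset.sum_const_zero, add_zero] at hkey
    · simpa using hkey
    · rw [QBZ_eq_zero s _ _ (Or.inl (by norm_num)), mul_zero]
  | succ K =>
    rw [Polynomial.coeff_X_mul, Polynomial.finset_sum_coeff]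
    have hX : (RatFunc.X : RatFunc ℚ) ≠ 0 := RatFunc.X_ne_zero
    have hterm : ∀ j ∈ Finset.Icc 1 s,
        (Polynomial.C ((RatFunc.X : RatFunc ℚ) ^ ((n : ℤ) - j - 1)) *
          (TT s ((n : ℤ) - j)).comp
            (Polynomial.C ((RatFunc.X : RatFunc ℚ)⁻¹) * Polynomial.X)).coeff K =
        (RatFunc.X : RatFunc ℚ) ^ ((n : ℤ) - ((K : ℤ) + 1) - (j : ℤ)) *
          QBZ s ((n : ℤ) - ((K : ℤ) + 1) - (j : ℤ)) ((K : ℤ)) := by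
      intro j _
      rw [Polynomial.coeff_C_mul, coeff_comp_C_mul_X, TT_coeff]
      have harith : ((n : ℤ) - j) - 1 - (K : ℤ) = (n : ℤ) - ((K : ℤ) + 1) - (j : ℤ) := by ring
      rw [harith, ← mul_assoc]
      congr 1
      rw [← zpow_natCast ((RatFunc.X : RatFunc ℚ)⁻¹) K, inv_zpow, ← zpow_neg,
        ← zpow_add₀ hX]
      congr 1 <;> omega
    rw [Finset.sum_congr rfl hterm]
    simp only [Nat.cast_add, Nat.cast_one]
    have e1 : (n : ℤ) + 1 - 1 - ((K : ℤ) + 1) = (n : ℤ) - ((K : ℤ) + 1) := by ring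
    have e2 : (n : ℤ) - 1 - ((K : ℤ) + 1) = (n : ℤ) - ((K : ℤ) + 1) - 1 := by ring
    rw [e1, e2]
    rw [key s ((n : ℤ) - ((K : ℤ) + 1)) ((K : ℤ) + 1) (by positivity) (Or.inr (by positivity))]
    norm_num
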